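/- Conversely, let Γ be a bipartite multigraph on [d]×{L,R} in which every vertex has degree 2, which is invariant under ι, and whose cycles are all of types 1–4 (2-cycles between ι-fixed points; pairs of 2-cycles swapped by ι; cycles of length 2(2k+1) with exactly one ι-fixed point on each side; cycles of length 4k with exactly two ι-fixed points on one side and none on the other). Then the matrix M with 2M the adjacency matrix of Γ is a vertex of B_d^ι. -/

import Mathlib

lemma aux_sum_eq_one {α : Type*} {s : Finset α} {f : α → ℕ} [DecidableEq α]
    (h : ∑ x ∈ s, f x = 1) : ∃ a ∈ s, f a = 1 ∧ ∀ b ∈ s, b ≠ a → f b = 0 := by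
  have h0 : ∑ x ∈ s, f x ≠ 0 := by omega
  obtain ⟨a, ha, hfa⟩ := Finset.exists_ne_zero_of_sum_ne_zero h0
  have h1 : f a + ∑ x ∈ s.erase a, f x = 1 := by rw [Finset.add_sum_erase s f ha]; exact h
  have hfa1 : f a = 1 := by omega
  have hz : ∑ x ∈ s.erase a, f x = 0 := by omega
  exact ⟨a, ha, hfa1, fun b hb hba =>
    (Finset.sum_eq_zero_iff).1 hz b (Finset.mem_erase.2 ⟨hba, hb⟩)⟩


/-- The `ι`-invariant Birkhoff polytope for the involution `(ιM)_{ij} = M_{φ(i)ψ(j)}`. -/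
def invBirkhoff (d : ℕ) (φ ψ : Equiv.Perm (Fin d)) : Set (Matrix (Fin d) (Fin d) ℝ) :=
  {M | M ∈ doublyStochastic ℝ (Fin d) ∧ (fun i j => M (φ i) (ψ j)) = M}

/-- Converse direction: let `Γ` be a bipartite multigraph on `[d] × {L,R}` (encoded by
its natural-number adjacency function `N`) which is `ι`-invariant, in which every
vertex has degree `2`, and whose cycles are all of types 1–4:
type 1 (a 2-cycle between `ι`-fixed points), type 2 (a 2-cycle disjoint from its
`ι`-image), type 3 (length `2(2m+1)`, `m > 0`, with exactly one `ι`-fixed point on each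
side), type 4 (length `4m`, `m > 0`, with exactly two `ι`-fixed points, both on the
same side). Then the matrix `M` with `2M` the adjacency matrix of `Γ` is a vertex of
`B_d^ι`. -/
theorem stmt_15 (d : ℕ) (φ ψ : Equiv.Perm (Fin d)) (hφ : φ * φ = 1) (hψ : ψ * ψ = 1)
    (N : (Fin d ⊕ Fin d) → (Fin d ⊕ Fin d) → ℕ)
    (hsymm : ∀ v w, N v w = N w v)
    (hbipL : ∀ i i' : Fin d, N (Sum.inl i) (Sum.inl i') = 0)
    (hbipR : ∀ j j' : Fin d, N (Sum.inr j) (Sum.inr j') = 0)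
    (hdeg : ∀ v, ∑ w, N v w = 2)
    (hinv : ∀ v w, N (Sum.map φ ψ v) (Sum.map φ ψ w) = N v w)
    (hcycles : ∀ (n : ℕ), 2 ≤ n → ∀ z : ZMod n → Fin d ⊕ Fin d,
      Function.Injective z →
      (∀ k, 1 ≤ N (z k) (z (k + 1))) →
      (n = 2 → N (z 0) (z 1) = 2) →
      -- type 1
      (n = 2 ∧ ∀ k, Sum.map φ ψ (z k) = z k) ∨
      -- type 2
      (n = 2 ∧ ∀ k, Sum.map φ ψ (z k) ∉ Set.range z) ∨
      -- type 3
      (∃ m : ℕ, 0 < m ∧ n = 2 * (2 * m + 1) ∧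
        (∃! k, Sum.map φ ψ (z k) = z k ∧ (z k).isLeft) ∧
        (∃! k, Sum.map φ ψ (z k) = z k ∧ (z k).isRight)) ∨
      -- type 4
      (∃ m : ℕ, 0 < m ∧ n = 4 * m ∧
        ∃ k₁ k₂ : ZMod n, k₁ ≠ k₂ ∧
          Sum.map φ ψ (z k₁) = z k₁ ∧ Sum.map φ ψ (z k₂) = z k₂ ∧
          (∀ k, Sum.map φ ψ (z k) = z k → k = k₁ ∨ k = k₂) ∧
          ((z k₁).isLeft ∧ (z k₂).isLeft ∨ (z k₁).isRight ∧ (z k₂).isRight))) :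
    (fun i j => (N (Sum.inl i) (Sum.inr j) : ℝ) / 2) ∈
      Set.extremePoints ℝ (invBirkhoff d φ ψ) := by
  classical
  set M : Matrix (Fin d) (Fin d) ℝ := fun i j => (N (Sum.inl i) (Sum.inr j) : ℝ) / 2 with hMdef
  have hMval : ∀ i j, M i j = (N (Sum.inl i) (Sum.inr j) : ℝ) / 2 := fun i j => rfl
  have hrowN : ∀ i, ∑ j, N (Sum.inl i) (Sum.inr j) = 2 := by
    intro i
    have h := hdeg (Sum.inl i)
    rw [Fintype.sum_sum_type] at h
    simpa [hbipL] using h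
  have hcolN : ∀ j, ∑ i, N (Sum.inl i) (Sum.inr j) = 2 := by
    intro j
    have h := hdeg (Sum.inr j)
    rw [Fintype.sum_sum_type] at h
    simp only [hbipR] at h
    simp only [Finset.sum_const_zero, add_zero] at h
    calc ∑ i, N (Sum.inl i) (Sum.inr j) = ∑ i, N (Sum.inr j) (Sum.inl i) := by
          simp_rw [fun i => hsymm (Sum.inl i) (Sum.inr j)]
      _ = 2 := h
  have hNle2 : ∀ i j, N (Sum.inl i) (Sum.inr j) ≤ 2 := by
    intro i j
    calc N (Sum.inl i) (Sum.inr j) ≤ ∑ j', N (Sum.inl i) (Sum.inr j') :=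
          Finset.single_le_sum (f := fun j' => N (Sum.inl i) (Sum.inr j'))
            (fun _ _ => Nat.zero_le _) (Finset.mem_univ j)
      _ = 2 := hrowN i
  have hNinv : ∀ i j, N (Sum.inl (φ i)) (Sum.inr (ψ j)) = N (Sum.inl i) (Sum.inr j) := by
    intro i j
    have := hinv (Sum.inl i) (Sum.inr j)
    simpa using this
  have hMrow : ∀ i, ∑ j, M i j = 1 := by
    intro i
    simp only [hMval]
    rw [← Finset.sum_div, ← Nat.cast_sum, hrowN]
    norm_num
  have hMcol : ∀ j, ∑ i, M i j = 1 := by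
    intro j
    simp only [hMval]
    rw [← Finset.sum_div, ← Nat.cast_sum, hcolN]
    norm_num
  have hMmem : M ∈ invBirkhoff d φ ψ := by
    refine ⟨mem_doublyStochastic_iff_sum.2 ⟨fun i j => by positivity, hMrow, hMcol⟩, ?_⟩
    funext i j
    simp only [hMval, hNinv]
  show M ∈ Set.extremePoints ℝ (invBirkhoff d φ ψ)
  rw [mem_extremePoints]
  refine ⟨hMmem, ?_⟩
  rintro A ⟨hAds, hAinv⟩ B ⟨hBds, hBinv⟩ hseg
  obtain ⟨a, b, ha, hb, hab, hsum⟩ := hseg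
  have hent : ∀ i j, a * A i j + b * B i j = M i j := by
    intro i j
    have := congrFun (congrFun hsum i) j
    simpa using this
  have hA0 : ∀ i j, 0 ≤ A i j := fun i j => nonneg_of_mem_doublyStochastic hAds
  have hB0 : ∀ i j, 0 ≤ B i j := fun i j => nonneg_of_mem_doublyStochastic hBds
  have hA1 : ∀ i j, A i j ≤ 1 := fun i j => le_one_of_mem_doublyStochastic hAds
  have hB1 : ∀ i j, B i j ≤ 1 := fun i j => le_one_of_mem_doublyStochastic hBds
  suffices hAM : A = M by
    refine ⟨hAM, ?_⟩
    funext i j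
    have h1 := hent i j
    rw [hAM] at h1
    have : b * B i j = b * M i j := by linear_combination h1 - M i j * hab
    exact mul_left_cancel₀ (ne_of_gt hb) this
  by_contra hAM
  -- the difference matrix
  set D : Matrix (Fin d) (Fin d) ℝ := fun i j => A i j - M i j with hDdef
  have hDne : ∃ p : Fin d × Fin d, D p.1 p.2 ≠ 0 := by
    by_contra h
    push_neg at h
    apply hAM
    funext i j
    have := h (i, j)
    simp only [hDdef] at this
    linarith [this]
  have hD1 : ∀ i j, D i j ≠ 0 → N (Sum.inl i) (Sum.inr j) = 1 := by
    intro i j hne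
    have h2 := hNle2 i j
    have h3 : N (Sum.inl i) (Sum.inr j) = 0 ∨ N (Sum.inl i) (Sum.inr j) = 1 ∨
        N (Sum.inl i) (Sum.inr j) = 2 := by omega
    rcases h3 with h3 | h3 | h3
    · exfalso
      have hM0 : M i j = 0 := by rw [hMval, h3]; norm_num
      have he := hent i j
      rw [hM0] at he
      have : A i j = 0 := by nlinarith [hA0 i j, hB0 i j]
      apply hne
      simp only [hDdef]
      rw [this, hM0]; ring
    · exact h3
    · exfalso
      have hM2 : M i j = 1 := by rw [hMval, h3]; norm_num
      have he := hent i j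
      rw [hM2] at he
      have : A i j = 1 := by nlinarith [hA1 i j, hB1 i j]
      apply hne
      simp only [hDdef]
      rw [this, hM2]; ring
  have hDrow : ∀ i, ∑ j, D i j = 0 := by
    intro i
    simp only [hDdef]
    rw [Finset.sum_sub_distrib, sum_row_of_mem_doublyStochastic hAds, hMrow]
    ring
  have hDcol : ∀ j, ∑ i, D i j = 0 := by
    intro j
    simp only [hDdef]
    rw [Finset.sum_sub_distrib, sum_col_of_mem_doublyStochastic hAds, hMcol]
    ring
  have hDinv : ∀ i j, D (φ i) (ψ j) = D i j := by
    intro i j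
    simp only [hDdef]
    have h1 : A (φ i) (ψ j) = A i j := congrFun (congrFun hAinv i) j
    have h2 : M (φ i) (ψ j) = M i j := by simp only [hMval, hNinv]
    rw [h1, h2]
  -- row pair structure
  have hrowPair : ∀ i j, D i j ≠ 0 → ∃ j', D i j' = -D i j ∧ j' ≠ j ∧
      ∀ j'', D i j'' ≠ 0 → j'' = j ∨ j'' = j' := by
    intro i j hD
    have hN : N (Sum.inl i) (Sum.inr j) = 1 := hD1 i j hD
    have hsum' : ∑ j' ∈ Finset.univ.erase j, N (Sum.inl i) (Sum.inr j') = 1 := by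
      have h := hrowN i
      have h2 := Finset.add_sum_erase Finset.univ (fun j' => N (Sum.inl i) (Sum.inr j'))
        (Finset.mem_univ j)
      omega
    obtain ⟨j', hj'mem, hj'1, hj'z⟩ := aux_sum_eq_one hsum'
    have hj'ne : j' ≠ j := (Finset.mem_erase.1 hj'mem).1
    have hDz : ∀ j'', j'' ≠ j → j'' ≠ j' → D i j'' = 0 := by
      intro j'' h1 h2
      by_contra hc
      have h3 := hD1 i j'' hc
      have h4 := hj'z j'' (Finset.mem_erase.2 ⟨h1, Finset.mem_univ _⟩) h2
      omega
    have huniq : ∀ j'', D i j'' ≠ 0 → j'' = j ∨ j'' = j' := by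
      intro j'' h
      by_contra hc
      push_neg at hc
      exact h (hDz j'' hc.1 hc.2)
    have hsumpair : D i j + D i j' = 0 := by
      have h0 := hDrow i
      have h1 : ∑ j'', D i j'' = ∑ j'' ∈ ({j, j'} : Finset (Fin d)), D i j'' := by
        symm
        apply Finset.sum_subset (Finset.subset_univ _)
        intro x _ hx
        simp only [Finset.mem_insert, Finset.mem_singleton] at hx
        push_neg at hx
        exact hDz x hx.1 hx.2
      rw [h1, Finset.sum_pair (Ne.symm hj'ne)] at h0
      exact h0
    exact ⟨j', by linarith, hj'ne, huniq⟩
  -- column pair structure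
  have hcolPair : ∀ i j, D i j ≠ 0 → ∃ i', D i' j = -D i j ∧ i' ≠ i ∧
      ∀ i'', D i'' j ≠ 0 → i'' = i ∨ i'' = i' := by
    intro i j hD
    have hN : N (Sum.inl i) (Sum.inr j) = 1 := hD1 i j hD
    have hsum' : ∑ i' ∈ Finset.univ.erase i, N (Sum.inl i') (Sum.inr j) = 1 := by
      have h := hcolN j
      have h2 := Finset.add_sum_erase Finset.univ (fun i' => N (Sum.inl i') (Sum.inr j))
        (Finset.mem_univ i)
      omega
    obtain ⟨i', hi'mem, hi'1, hi'z⟩ := aux_sum_eq_one hsum'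
    have hi'ne : i' ≠ i := (Finset.mem_erase.1 hi'mem).1
    have hDz : ∀ i'', i'' ≠ i → i'' ≠ i' → D i'' j = 0 := by
      intro i'' h1 h2
      by_contra hc
      have h3 := hD1 i'' j hc
      have h4 := hi'z i'' (Finset.mem_erase.2 ⟨h1, Finset.mem_univ _⟩) h2
      omega
    have huniq : ∀ i'', D i'' j ≠ 0 → i'' = i ∨ i'' = i' := by
      intro i'' h
      by_contra hc
      push_neg at hc
      exact h (hDz i'' hc.1 hc.2)
    have hsumpair : D i j + D i' j = 0 := by
      have h0 := hDcol j
      have h1 : ∑ i'', D i'' j = ∑ i'' ∈ ({i, i'} : Finset (Fin d)), D i'' j := by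
        symm
        apply Finset.sum_subset (Finset.subset_univ _)
        intro x _ hx
        simp only [Finset.mem_insert, Finset.mem_singleton] at hx
        push_neg at hx
        exact hDz x hx.1 hx.2
      rw [h1, Finset.sum_pair (Ne.symm hi'ne)] at h0
      exact h0
    exact ⟨i', by linarith, hi'ne, huniq⟩
  choose rowO hrowOval hrowOne hrowOuniq using hrowPair
  choose colO hcolOval hcolOne hcolOuniq using hcolPair
  -- the two involutions
  set σg : Fin d × Fin d → Fin d × Fin d :=
    fun p => if h : D p.1 p.2 ≠ 0 then (colO p.1 p.2 h, p.2) else p with hσdef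
  set τg : Fin d × Fin d → Fin d × Fin d :=
    fun p => if h : D p.1 p.2 ≠ 0 then (p.1, rowO p.1 p.2 h) else p with hτdef
  have hσapp : ∀ p (h : D p.1 p.2 ≠ 0), σg p = (colO p.1 p.2 h, p.2) := by
    intro p h; simp only [hσdef]; rw [dif_pos h]
  have hσid : ∀ p, ¬ D p.1 p.2 ≠ 0 → σg p = p := by
    intro p h; simp only [hσdef]; rw [dif_neg h]
  have hτapp : ∀ p (h : D p.1 p.2 ≠ 0), τg p = (p.1, rowO p.1 p.2 h) := by
    intro p h; simp only [hτdef]; rw [dif_pos h]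
  have hτid : ∀ p, ¬ D p.1 p.2 ≠ 0 → τg p = p := by
    intro p h; simp only [hτdef]; rw [dif_neg h]
  have hσval : ∀ p (h : D p.1 p.2 ≠ 0), D (σg p).1 (σg p).2 = -D p.1 p.2 := by
    intro p h; rw [hσapp p h]; exact hcolOval p.1 p.2 h
  have hσsupp : ∀ p (h : D p.1 p.2 ≠ 0), D (σg p).1 (σg p).2 ≠ 0 := by
    intro p h; rw [hσval p h]; exact neg_ne_zero.2 h
  have hσ2 : ∀ p, (σg p).2 = p.2 := by
    intro p; by_cases h : D p.1 p.2 ≠ 0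
    · rw [hσapp p h]
    · rw [hσid p h]
  have hσ1 : ∀ p (h : D p.1 p.2 ≠ 0), (σg p).1 ≠ p.1 := by
    intro p h; rw [hσapp p h]; exact hcolOne p.1 p.2 h
  have hτval : ∀ p (h : D p.1 p.2 ≠ 0), D (τg p).1 (τg p).2 = -D p.1 p.2 := by
    intro p h; rw [hτapp p h]; exact hrowOval p.1 p.2 h
  have hτsupp : ∀ p (h : D p.1 p.2 ≠ 0), D (τg p).1 (τg p).2 ≠ 0 := by
    intro p h; rw [hτval p h]; exact neg_ne_zero.2 h
  have hτ1 : ∀ p, (τg p).1 = p.1 := by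
    intro p; by_cases h : D p.1 p.2 ≠ 0
    · rw [hτapp p h]
    · rw [hτid p h]
  have hτ2 : ∀ p (h : D p.1 p.2 ≠ 0), (τg p).2 ≠ p.2 := by
    intro p h; rw [hτapp p h]; exact hrowOne p.1 p.2 h
  have hσinvol : Function.Involutive σg := by
    intro p
    by_cases h : D p.1 p.2 ≠ 0
    · have h2 := hσsupp p h
      rw [hσapp _ h2]
      have hD' : D p.1 (σg p).2 ≠ 0 := by rw [hσ2 p]; exact h
      rcases hcolOuniq (σg p).1 (σg p).2 h2 p.1 hD' with hu | hu
      · exact (hσ1 p h hu.symm).elim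
      · exact Prod.ext hu.symm (hσ2 p)
    · rw [hσid p h, hσid p h]
  have hτinvol : Function.Involutive τg := by
    intro p
    by_cases h : D p.1 p.2 ≠ 0
    · have h2 := hτsupp p h
      rw [hτapp _ h2]
      have hD' : D (τg p).1 p.2 ≠ 0 := by rw [hτ1 p]; exact h
      rcases hrowOuniq (τg p).1 (τg p).2 h2 p.2 hD' with hu | hu
      · exact (hτ2 p h hu.symm).elim
      · exact Prod.ext (hτ1 p) hu.symm
    · rw [hτid p h, hτid p h]
  obtain ⟨p₀, hp₀⟩ := hDne
  set t : ℝ := D p₀.1 p₀.2 with htdef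
  have ht0 : t ≠ 0 := hp₀
  set P : Equiv.Perm (Fin d × Fin d) := (hσinvol.toPerm σg).trans (hτinvol.toPerm τg) with hPdef
  have hPapp : ∀ p, P p = τg (σg p) := by
    intro p
    simp [hPdef, Equiv.trans_apply, Function.Involutive.coe_toPerm]
  set e : ℕ → Fin d × Fin d := fun k => (⇑P)^[k] p₀ with hedef
  have he0 : e 0 = p₀ := by simp [hedef]
  have hesucc : ∀ k, e (k + 1) = τg (σg (e k)) := by
    intro k
    simp only [hedef]
    rw [Function.iterate_succ_apply']
    exact hPapp _
  have hesupp : ∀ k, D (e k).1 (e k).2 ≠ 0 ∧ D (e k).1 (e k).2 = t := by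
    intro k
    induction k with
    | zero => rw [he0]; exact ⟨hp₀, rfl⟩
    | succ k ih =>
      rw [hesucc k]
      have h1 := hσsupp (e k) ih.1
      have h2 := hσval (e k) ih.1
      have h3 := hτsupp (σg (e k)) h1
      have h4 := hτval (σg (e k)) h1
      refine ⟨h3, ?_⟩
      rw [h4, h2, ih.2]; ring
  have hper : Function.IsPeriodicPt (⇑P) (orderOf P) p₀ := by
    show (⇑P)^[orderOf P] p₀ = p₀
    rw [← Equiv.Perm.coe_pow, pow_orderOf_eq_one]
    rfl
  set c : ℕ := Function.minimalPeriod (⇑P) p₀ with hcdef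
  have hcpos : 0 < c := hper.minimalPeriod_pos (orderOf_pos P)
  have hecyc : e c = e 0 := by
    simp only [hedef, hcdef, Function.iterate_zero_apply]
    exact Function.iterate_minimalPeriod
  have heinj : ∀ q r, q < c → r < c → e q = e r → q = r := by
    intro q r hq hr h
    simp only [hedef] at h
    rw [hcdef] at hq hr
    exact Function.iterate_injOn_Iio_minimalPeriod hq hr h
  have hiinj : ∀ q r, q < c → r < c → (e q).1 = (e r).1 → q = r := by
    intro q r hq hr heq
    by_contra hne
    have hner : e q ≠ e r := fun h => hne (heinj q r hq hr h)
    have hq1 := (hesupp q).1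
    have hr1 := (hesupp r).1
    have hr1' : D (e q).1 (e r).2 ≠ 0 := by rw [heq]; exact hr1
    rcases hrowOuniq (e q).1 (e q).2 hq1 (e r).2 hr1' with h | h
    · exact hner (Prod.ext heq h.symm)
    · have hv : D (e q).1 (e r).2 = -D (e q).1 (e q).2 := by
        rw [h]; exact hrowOval _ _ hq1
      have hL : D (e q).1 (e r).2 = t := by rw [heq]; exact (hesupp r).2
      rw [hL, (hesupp q).2] at hv
      exact ht0 (by linarith)
  have hjinj : ∀ q r, q < c → r < c → (e q).2 = (e r).2 → q = r := by
    intro q r hq hr heq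
    by_contra hne
    have hner : e q ≠ e r := fun h => hne (heinj q r hq hr h)
    have hq1 := (hesupp q).1
    have hr1 := (hesupp r).1
    have hr1' : D (e r).1 (e q).2 ≠ 0 := by rw [heq]; exact hr1
    rcases hcolOuniq (e q).1 (e q).2 hq1 (e r).1 hr1' with h | h
    · exact hner (Prod.ext h.symm heq)
    · have hv : D (e r).1 (e q).2 = -D (e q).1 (e q).2 := by
        rw [h]; exact hcolOval _ _ hq1
      have hL : D (e r).1 (e q).2 = t := by rw [heq]; exact (hesupp r).2
      rw [hL, (hesupp q).2] at hv
      exact ht0 (by linarith)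
  have hc2 : 2 ≤ c := by
    by_contra h
    have hc1 : c = 1 := by omega
    have h1 : e 1 = e 0 := by rw [← hc1]; exact hecyc
    have h2 := congrArg Prod.fst h1
    rw [hesucc 0, hτ1] at h2
    exact hσ1 (e 0) (hesupp 0).1 h2
  have hsedge : ∀ q, D (e (q+1)).1 (e q).2 = -t ∧ D (e (q+1)).1 (e q).2 ≠ 0 := by
    intro q
    have h1 := (hesupp q).1
    have h2 : (e (q+1)).1 = (σg (e q)).1 := by rw [hesucc q, hτ1]
    have h3 : (σg (e q)).2 = (e q).2 := hσ2 (e q)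
    constructor
    · rw [h2, ← h3, hσval (e q) h1, (hesupp q).2]
    · rw [h2, ← h3]; exact hσsupp (e q) h1
  -- the cycle as a function on ZMod (2c)
  set n : ℕ := 2 * c with hndef
  have hn4 : 4 ≤ n := by omega
  haveI : NeZero n := ⟨by omega⟩
  haveI : Fact (1 < n) := ⟨by omega⟩
  set z : ZMod n → Fin d ⊕ Fin d := fun k =>
    if k.val % 2 = 0 then Sum.inl (e (k.val / 2)).1 else Sum.inr (e (k.val / 2)).2 with hzdef
  have hzeven : ∀ k : ZMod n, k.val % 2 = 0 → z k = Sum.inl (e (k.val / 2)).1 := by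
    intro k h; simp only [hzdef]; rw [if_pos h]
  have hzodd : ∀ k : ZMod n, k.val % 2 = 1 → z k = Sum.inr (e (k.val / 2)).2 := by
    intro k h; simp only [hzdef]; rw [if_neg (by omega)]
  have hvlt : ∀ k : ZMod n, k.val < n := fun k => ZMod.val_lt k
  have hsuccval : ∀ k : ZMod n, (k + 1).val = (k.val + 1) % n := by
    intro k; rw [ZMod.val_add, ZMod.val_one]
  have hzinj : Function.Injective z := by
    intro k l h
    have hk := hvlt k; have hl := hvlt l
    by_cases hk2 : k.val % 2 = 0 <;> by_cases hl2 : l.val % 2 = 0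
    · rw [hzeven k hk2, hzeven l hl2] at h
      have h1 := Sum.inl.inj h
      have h2 := hiinj _ _ (by omega) (by omega) h1
      apply ZMod.val_injective
      omega
    · rw [hzeven k hk2, hzodd l (by omega)] at h
      exact absurd h (by simp)
    · rw [hzodd k (by omega), hzeven l hl2] at h
      exact absurd h (by simp)
    · rw [hzodd k (by omega), hzodd l (by omega)] at h
      have h1 := Sum.inr.inj h
      have h2 := hjinj _ _ (by omega) (by omega) h1
      apply ZMod.val_injective
      omega
  have hedge : ∀ k : ZMod n, 1 ≤ N (z k) (z (k + 1)) := by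
    intro k
    have hk := hvlt k
    have hs := hsuccval k
    by_cases hk2 : k.val % 2 = 0
    · have hlt' : k.val + 1 < n := by omega
      have h1 : (k+1).val = k.val + 1 := by rw [hs, Nat.mod_eq_of_lt hlt']
      rw [hzeven k hk2, hzodd (k+1) (by omega), h1]
      have hq : (k.val + 1) / 2 = k.val / 2 := by omega
      rw [hq]
      have := hD1 _ _ (hesupp (k.val / 2)).1
      omega
    · have hk2' : k.val % 2 = 1 := by omega
      rw [hzodd k hk2']
      have hD := (hsedge (k.val / 2)).2
      have hN := hD1 _ _ hD
      by_cases hlt : k.val + 1 < n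
      · have h1 : (k+1).val = k.val + 1 := by rw [hs, Nat.mod_eq_of_lt hlt]
        rw [hzeven (k+1) (by omega), h1]
        have hq : (k.val + 1) / 2 = k.val / 2 + 1 := by omega
        rw [hq, hsymm]
        omega
      · have h1 : (k+1).val = 0 := by
          rw [hs, show k.val + 1 = n from by omega, Nat.mod_self]
        rw [hzeven (k+1) (by omega), h1]
        simp only [Nat.zero_div]
        have hq : k.val / 2 + 1 = c := by omega
        have h2 : (e 0).1 = (e (k.val / 2 + 1)).1 := by rw [hq, hecyc]
        rw [h2, hsymm]
        omega
  have hmain := hcycles n (by omega) z hzinj hedge (fun h => absurd h (by omega))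
  -- propagation of a fixed point along the cycle
  have hfixe : ∀ q, (φ (e q).1 = (e q).1 ∧ ψ (e q).2 = (e q).2) →
      (φ (e (q+1)).1 = (e (q+1)).1 ∧ ψ (e (q+1)).2 = (e (q+1)).2) := by
    rintro q ⟨hfi, hfj⟩
    have hq1' := (hesupp (q+1)).1
    have hvq1 := (hesupp (q+1)).2
    have hse := hsedge q
    have hstep1 : φ (e (q+1)).1 = (e (q+1)).1 := by
      have hval' : D (φ (e (q+1)).1) (e q).2 = -t := by
        rw [← hfj, hDinv]
        exact hse.1
      have hD' : D (φ (e (q+1)).1) (e q).2 ≠ 0 := by rw [hval']; exact neg_ne_zero.2 ht0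
      rcases hcolOuniq (e (q+1)).1 (e q).2 hse.2 (φ (e (q+1)).1) hD' with h | h
      · exact h
      · exfalso
        have hval'' : D (φ (e (q+1)).1) (e q).2 = t := by
          rw [h, hcolOval _ _ hse.2, hse.1]; ring
        rw [hval'] at hval''
        exact ht0 (by linarith)
    have hstep2 : ψ (e (q+1)).2 = (e (q+1)).2 := by
      have hval' : D (e (q+1)).1 (ψ (e (q+1)).2) = t := by
        rw [← hstep1, hDinv]
        exact hvq1
      have hD' : D (e (q+1)).1 (ψ (e (q+1)).2) ≠ 0 := by rw [hval']; exact ht0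
      rcases hrowOuniq (e (q+1)).1 (e (q+1)).2 hq1' (ψ (e (q+1)).2) hD' with h | h
      · exact h
      · exfalso
        have hval'' : D (e (q+1)).1 (ψ (e (q+1)).2) = -t := by
          rw [h, hrowOval _ _ hq1', hvq1]
        rw [hval'] at hval''
        exact ht0 (by linarith)
    exact ⟨hstep1, hstep2⟩
  have hperK : ∀ K m, e (m + c * K) = e m := by
    intro K
    induction K with
    | zero => intro m; simp
    | succ K ih =>
      intro m
      have hh : m + c * (K+1) = (m + c * K) + c := by ring
      rw [hh]
      have h2 : e ((m + c * K) + c) = e (m + c * K) := by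
        simp only [hedef]
        rw [Function.iterate_add_apply, hcdef, Function.iterate_minimalPeriod]
      rw [h2, ih]
  have hallfix : (∃ k : ZMod n, Sum.map φ ψ (z k) = z k) →
      ∀ k' : ZMod n, Sum.map φ ψ (z k') = z k' := by
    rintro ⟨k, hk⟩
    have hfixq : ∃ q, φ (e q).1 = (e q).1 ∧ ψ (e q).2 = (e q).2 := by
      by_cases hk2 : k.val % 2 = 0
      · rw [hzeven k hk2] at hk
        simp only [Sum.map_inl, Sum.inl.injEq] at hk
        refine ⟨k.val / 2, hk, ?_⟩
        have hq1 := (hesupp (k.val / 2)).1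
        have hv1 : D (e (k.val / 2)).1 (ψ (e (k.val / 2)).2) = t := by
          rw [← hk, hDinv]
          exact (hesupp (k.val / 2)).2
        have hD' : D (e (k.val / 2)).1 (ψ (e (k.val / 2)).2) ≠ 0 := by
          rw [hv1]; exact ht0
        rcases hrowOuniq (e (k.val / 2)).1 (e (k.val / 2)).2 hq1 (ψ (e (k.val / 2)).2) hD'
          with h | h
        · exact h
        · exfalso
          have hv2 : D (e (k.val / 2)).1 (ψ (e (k.val / 2)).2) = -t := by
            rw [h, hrowOval _ _ hq1, (hesupp (k.val / 2)).2]
          rw [hv1] at hv2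
          exact ht0 (by linarith)
      · rw [hzodd k (by omega)] at hk
        simp only [Sum.map_inr, Sum.inr.injEq] at hk
        refine ⟨k.val / 2, ?_, hk⟩
        have hq1 := (hesupp (k.val / 2)).1
        have hv1 : D (φ (e (k.val / 2)).1) (e (k.val / 2)).2 = t := by
          rw [← hk, hDinv]
          exact (hesupp (k.val / 2)).2
        have hD' : D (φ (e (k.val / 2)).1) (e (k.val / 2)).2 ≠ 0 := by
          rw [hv1]; exact ht0
        rcases hcolOuniq (e (k.val / 2)).1 (e (k.val / 2)).2 hq1 (φ (e (k.val / 2)).1) hD'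
          with h | h
        · exact h
        · exfalso
          have hv2 : D (φ (e (k.val / 2)).1) (e (k.val / 2)).2 = -t := by
            rw [h, hcolOval _ _ hq1, (hesupp (k.val / 2)).2]
          rw [hv1] at hv2
          exact ht0 (by linarith)
    obtain ⟨q, hfq⟩ := hfixq
    have hforward : ∀ s, φ (e (q + s)).1 = (e (q + s)).1 ∧ ψ (e (q + s)).2 = (e (q + s)).2 := by
      intro s
      induction s with
      | zero => exact hfq
      | succ s ih =>
        have hh : q + (s + 1) = (q + s) + 1 := by omega
        rw [hh]
        exact hfixe (q + s) ih
    have hallq : ∀ m, φ (e m).1 = (e m).1 ∧ ψ (e m).2 = (e m).2 := by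
      intro m
      have hle : q ≤ m + c * q := by
        have : q ≤ c * q := Nat.le_mul_of_pos_left q hcpos
        omega
      have h1 := hforward (m + c * q - q)
      have h2 : q + (m + c * q - q) = m + c * q := by omega
      rw [h2] at h1
      rwa [hperK q m] at h1
    intro k'
    by_cases hk2 : k'.val % 2 = 0
    · rw [hzeven k' hk2]
      simp [Sum.map_inl, (hallq _).1]
    · rw [hzodd k' (by omega)]
      simp [Sum.map_inr, (hallq _).2]
  -- numeric facts in ZMod n
  have hv0 : (0 : ZMod n).val = 0 := ZMod.val_zero
  have hv1 : (1 : ZMod n).val = 1 := ZMod.val_one n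
  have hv2 : (2 : ZMod n).val = 2 := by
    have h := ZMod.val_cast_of_lt (a := 2) (show 2 < n by omega)
    simpa using h
  have hne01 : (0 : ZMod n) ≠ 1 := fun h => by
    have := congrArg ZMod.val h; rw [hv0, hv1] at this; omega
  have hne02 : (0 : ZMod n) ≠ 2 := fun h => by
    have := congrArg ZMod.val h; rw [hv0, hv2] at this; omega
  have hne12 : (1 : ZMod n) ≠ 2 := fun h => by
    have := congrArg ZMod.val h; rw [hv1, hv2] at this; omega
  rcases hmain with ⟨h2, _⟩ | ⟨h2, _⟩ |
      ⟨m, hm0, hnm, ⟨kL, ⟨hkLfix, _⟩, hkLuniq⟩, _⟩ |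
      ⟨m, hm0, hnm, k₁, k₂, hk12, hfix1, _, huniq, _⟩
  · omega
  · omega
  · -- type 3 : two distinct fixed points on the left
    have hall := hallfix ⟨kL, hkLfix⟩
    have hL0 : (0 : ZMod n) = kL := by
      apply hkLuniq
      refine ⟨hall 0, ?_⟩
      rw [hzeven 0 (by rw [hv0])]
      simp
    have hL2 : (2 : ZMod n) = kL := by
      apply hkLuniq
      refine ⟨hall 2, ?_⟩
      rw [hzeven 2 (by rw [hv2])]
      simp
    exact hne02 (hL0.trans hL2.symm)
  · -- type 4 : at most two fixed points, but 0, 1, 2 are all fixed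
    have hall := hallfix ⟨k₁, hfix1⟩
    have h0 := huniq 0 (hall 0)
    have h1 := huniq 1 (hall 1)
    have h2 := huniq 2 (hall 2)
    rcases h0 with h0 | h0 <;> rcases h1 with h1 | h1 <;> rcases h2 with h2 | h2 <;>
      first
        | exact hne01 (h0.trans h1.symm)
        | exact hne02 (h0.trans h2.symm)
        | exact hne12 (h1.trans h2.symm)
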